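/- Let G be a multigraph and let M be a matching of G such that every edge of M is fully G-saturated and M is maximal subject to this property (no fully G-saturated edge vertex-disjoint from M can be added to M). Then χ'(G − M) ≤ Δ(G) + μ(G) − 1. -/

import Mathlib

/-- A finite multigraph: finite vertex and edge types, each edge has an unordered pair of
endvertices, and there are no loops. -/
structure Multigraph where
  V : Type
  E : Type
  [fintypeV : Fintype V]
  [fintypeE : Fintype E]
  ends : E → Sym2 V
  loopless : ∀ e, ¬ (ends e).IsDiag

attribute [instance] Multigraph.fintypeV Multigraph.fintypeE

namespace Multigraph

section Basic

variable (G : Multigraph)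

/-- The degree of a vertex: the number of edges incident with it. -/
noncomputable def degree (v : G.V) : ℕ := {e : G.E | v ∈ G.ends e}.ncard

/-- The maximum degree Δ(G). -/
noncomputable def maxDegree : ℕ := sSup (Set.range G.degree)

/-- The number of edges joining `x` and `y` (the multiplicity e_G(x,y)). -/
noncomputable def mult (x y : G.V) : ℕ := {e : G.E | G.ends e = s(x, y)}.ncard

/-- The maximum multiplicity μ(G). -/
noncomputable def maxMult : ℕ := sSup {m : ℕ | ∃ x y : G.V, G.mult x y = m}

/-- `c` is a proper edge coloring, with palette `{1,…,k}`, of the edges in `D`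
(edges sharing an endvertex get distinct colors). -/
def IsProperColoringOn (k : ℕ) (D : Set G.E) (c : G.E → ℕ) : Prop :=
  (∀ e ∈ D, c e ∈ Set.Icc 1 k) ∧
  ∀ e ∈ D, ∀ f ∈ D, e ≠ f → (∃ v, v ∈ G.ends e ∧ v ∈ G.ends f) → c e ≠ c f

/-- A proper `k`-edge-coloring of all of `G`. -/
def IsProperColoring (k : ℕ) (c : G.E → ℕ) : Prop := G.IsProperColoringOn k Set.univ c

/-- The chromatic index of the subgraph of `G` consisting of the edges in `D`
(vertices are irrelevant for edge colorings). -/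
noncomputable def chromIndexOn (D : Set G.E) : ℕ := sInf {k | ∃ c, G.IsProperColoringOn k D c}

/-- The chromatic index χ'(G). -/
noncomputable def chromIndex : ℕ := G.chromIndexOn Set.univ

/-- The set of colors of the palette `{1,…,k}` missing at `v`, where only the edges in `D`
are regarded as colored. -/
def missingOn (k : ℕ) (D : Set G.E) (c : G.E → ℕ) (v : G.V) : Set ℕ :=
  {i | i ∈ Set.Icc 1 k ∧ ∀ e ∈ D, v ∈ G.ends e → c e ≠ i}

/-- `X` is elementary: missing-color sets of distinct vertices of `X` are disjoint. -/
def IsElementaryOn (k : ℕ) (D : Set G.E) (c : G.E → ℕ) (X : Set G.V) : Prop :=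
  ∀ u ∈ X, ∀ v ∈ X, u ≠ v → G.missingOn k D c u ∩ G.missingOn k D c v = ∅

/-- The boundary ∂_G(X): edges with an endvertex in `X` and an endvertex outside `X`. -/
def boundary (X : Set G.V) : Set G.E :=
  {e | (∃ v ∈ G.ends e, v ∈ X) ∧ (∃ v ∈ G.ends e, v ∉ X)}

/-- `X` is strongly closed (w.r.t. the coloring `c` of the edges in `D`): every color on a
boundary edge of `X` is present at every vertex of `X`, and the colors on the boundary edges
are pairwise distinct. -/
def IsStronglyClosedOn (D : Set G.E) (c : G.E → ℕ) (X : Set G.V) : Prop :=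
  (∀ e ∈ G.boundary X ∩ D, ∀ v ∈ X, ∃ f ∈ D, v ∈ G.ends f ∧ c f = c e) ∧
  ∀ e ∈ G.boundary X ∩ D, ∀ f ∈ G.boundary X ∩ D, e ≠ f → c e ≠ c f

end Basic

/-- A subgraph of `G`: a set of vertices together with a set of edges all of whose
endvertices belong to the vertex set. -/
structure Subgraph (G : Multigraph) where
  verts : Set G.V
  edges : Set G.E
  support : ∀ e ∈ edges, ∀ v, v ∈ G.ends e → v ∈ verts

section Sub

variable (G : Multigraph)

/-- The whole graph, as a subgraph of itself. -/
def top : G.Subgraph := ⟨Set.univ, Set.univ, fun _ _ _ _ => Set.mem_univ _⟩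

/-- `H` is a `k`-dense subgraph: it has an odd number of vertices and
`|E(H)| = (|V(H)|-1)·k/2`. -/
def IsDense (k : ℕ) (H : G.Subgraph) : Prop :=
  Odd H.verts.ncard ∧ 2 * H.edges.ncard = (H.verts.ncard - 1) * k

/-- `H` is a `k`-dense subgraph of `G - F` (the graph obtained by deleting the edges of `F`). -/
def IsDenseIn (F : Set G.E) (k : ℕ) (H : G.Subgraph) : Prop :=
  H.edges ∩ F = ∅ ∧ G.IsDense k H

/-- `H` is a maximal `k`-dense subgraph of `G - F`. -/
def IsMaximalDenseIn (F : Set G.E) (k : ℕ) (H : G.Subgraph) : Prop :=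
  G.IsDenseIn F k H ∧
  ∀ H' : G.Subgraph, G.IsDenseIn F k H' → H.verts ⊆ H'.verts → H.edges ⊆ H'.edges →
    H.verts = H'.verts ∧ H.edges = H'.edges

/-- The density Γ(H) of a subgraph `H` of `G`:
`max { 2|E(H')|/(|V(H')|-1) : H' ⊆ H, |V(H')| ≥ 3 odd }` (and `0` if there is no such `H'`,
since in `ℝ` the supremum of the empty set is `0`). -/
noncomputable def densityOf (H : G.Subgraph) : ℝ :=
  sSup {x : ℝ | ∃ H' : G.Subgraph, H'.verts ⊆ H.verts ∧ H'.edges ⊆ H.edges ∧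
    3 ≤ H'.verts.ncard ∧ Odd H'.verts.ncard ∧
    x = 2 * (H'.edges.ncard : ℝ) / ((H'.verts.ncard : ℝ) - 1)}

/-- The density Γ(G). -/
noncomputable def density : ℝ := G.densityOf G.top

/-- `e` is a `k`-critical edge of `G`: `χ'(G-e) = k < χ'(G) = k+1`. -/
def IsCriticalEdge (k : ℕ) (e : G.E) : Prop :=
  G.chromIndexOn {e}ᶜ = k ∧ G.chromIndex = k + 1

/-- Degree of `v` in the subgraph consisting of the edges in `D`. -/
noncomputable def degreeOn (D : Set G.E) (v : G.V) : ℕ := {e : G.E | e ∈ D ∧ v ∈ G.ends e}.ncard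

/-- Maximum degree of the subgraph consisting of the edges in `D`. -/
noncomputable def maxDegreeOn (D : Set G.E) : ℕ := sSup (Set.range (G.degreeOn D))

/-- Multiplicity of the pair `x,y` in the subgraph consisting of the edges in `D`. -/
noncomputable def multOn (D : Set G.E) (x y : G.V) : ℕ :=
  {e : G.E | e ∈ D ∧ G.ends e = s(x, y)}.ncard

/-- Maximum multiplicity of the subgraph consisting of the edges in `D`. -/
noncomputable def maxMultOn (D : Set G.E) : ℕ := sSup {m : ℕ | ∃ x y : G.V, G.multOn D x y = m}

/-- The simple graph underlying the subgraph of `G` with edge set `D`. -/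
def simpleOn (D : Set G.E) : SimpleGraph G.V where
  Adj a b := a ≠ b ∧ ∃ e ∈ D, G.ends e = s(a, b)
  symm := by
    constructor
    rintro a b ⟨hab, e, he, hh⟩
    exact ⟨hab.symm, e, he, hh.trans Sym2.eq_swap⟩
  loopless := by constructor; rintro a ⟨h, -⟩; exact h rfl

/-- The diameter (in `ℕ∞`) of the subgraph with vertex set `S` and edge set `D`:
the greatest distance between a pair of its vertices. -/
noncomputable def diamOn (S : Set G.V) (D : Set G.E) : ℕ∞ :=
  sSup {d : ℕ∞ | ∃ u ∈ S, ∃ v ∈ S, (G.simpleOn D).edist u v = d}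

/-- The distance (in `ℕ∞`) between two edges of `G`: the length of a shortest path connecting
an endvertex of `e` and an endvertex of `f`. -/
noncomputable def edgeDist (e f : G.E) : ℕ∞ :=
  sInf {d : ℕ∞ | ∃ u v : G.V, u ∈ G.ends e ∧ v ∈ G.ends f ∧
    (G.simpleOn Set.univ).edist u v = d}

/-- A matching: a set of edges no two of which share an endvertex. -/
def IsMatching (M : Set G.E) : Prop :=
  ∀ e ∈ M, ∀ f ∈ M, e ≠ f → ∀ v : G.V, v ∈ G.ends e → v ∉ G.ends f

/-- An edge `e ∈ E_G(x,y)` is fully `G`-saturated if `d_G(x) = d_G(y) = Δ(G)` and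
`e_G(x,y) = μ(G)`. -/
def IsFullySaturated (e : G.E) : Prop :=
  ∃ x y : G.V, G.ends e = s(x, y) ∧ G.degree x = G.maxDegree ∧ G.degree y = G.maxDegree ∧
    G.mult x y = G.maxMult

/-- One step along a Kempe `(α,β)`-chain: an edge of `D` colored `α` or `β` joining the
two vertices. -/
def chainStep (D : Set G.E) (c : G.E → ℕ) (α β : ℕ) (a b : G.V) : Prop :=
  ∃ e ∈ D, G.ends e = s(a, b) ∧ (c e = α ∨ c e = β)

/-- `u` and `v` lie on the same `(α,β)`-chain, i.e. `P_u(α,β) = P_v(α,β)`. -/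
def sameChain (D : Set G.E) (c : G.E → ℕ) (α β : ℕ) (u v : G.V) : Prop :=
  Relation.ReflTransGen (G.chainStep D c α β) u v

end Sub

/-- The Goldberg–Seymour theorem (proved by Chen, Jing and Zang), as a hypothesis:
every multigraph `G'` with `χ'(G') ≥ Δ(G')+2` satisfies `χ'(G') = ⌈Γ(G')⌉`. -/
def GoldbergSeymour : Prop :=
  ∀ G' : Multigraph, G'.maxDegree + 2 ≤ G'.chromIndex → (G'.chromIndex : ℤ) = ⌈G'.density⌉

/-- A (general) multi-fan at `x` with respect to the edge `e₀ ∈ E_G(x,y₀)` and the coloring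
`c` of the edges in `D` with palette `{1,…,k}`: a sequence `(x, e₀, y₀, e₁, y₁, …, e_p, y_p)`
of vertices and pairwise distinct edges with `e_i ∈ E_G(x, y_i)` and, for `i ≥ 1`,
`c(e_i)` missing at `y_j` for some `j < i`. -/
structure MultiFan (G : Multigraph) (k : ℕ) (D : Set G.E) (c : G.E → ℕ)
    (x : G.V) (e₀ : G.E) (y₀ : G.V) where
  p : ℕ
  edge : Fin (p + 1) → G.E
  vx : Fin (p + 1) → G.V
  edge_zero : edge 0 = e₀
  vx_zero : vx 0 = y₀
  ends_eq : ∀ i, G.ends (edge i) = s(x, vx i)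
  edge_inj : Function.Injective edge
  fan_cond : ∀ i : Fin (p + 1), i ≠ 0 →
    ∃ j : Fin (p + 1), j < i ∧ c (edge i) ∈ G.missingOn k D c (vx j)

namespace MultiFan

variable {G : Multigraph} {k : ℕ} {D : Set G.E} {c : G.E → ℕ} {x : G.V} {e₀ : G.E} {y₀ : G.V}

/-- The vertex set `V(F)` of a multi-fan. -/
def verts (F : MultiFan G k D c x e₀ y₀) : Set G.V := insert x (Set.range F.vx)

/-- `F` is a subsequence of `F'`. -/
def Subseq (F F' : MultiFan G k D c x e₀ y₀) : Prop :=
  ∃ ι : Fin (F.p + 1) → Fin (F'.p + 1), StrictMono ι ∧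
    ∀ i, F'.edge (ι i) = F.edge i ∧ F'.vx (ι i) = F.vx i

/-- `F` is a maximal multi-fan: no multi-fan contains it as a proper subsequence. -/
def IsMaximal (F : MultiFan G k D c x e₀ y₀) : Prop :=
  ∀ F' : MultiFan G k D c x e₀ y₀, F.Subseq F' → F'.p = F.p

/-- `F` contains no `i`-edge. -/
def NoColor (F : MultiFan G k D c x e₀ y₀) (i : ℕ) : Prop :=
  ∀ j, F.edge j ∈ D → c (F.edge j) ≠ i

/-- `F` is a multi-fan without `i`-edges that is maximal among such. -/
def IsMaximalWithout (F : MultiFan G k D c x e₀ y₀) (i : ℕ) : Prop :=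
  F.NoColor i ∧
  ∀ F' : MultiFan G k D c x e₀ y₀, F'.NoColor i → F.Subseq F' → F'.p = F.p

/-- `e_F(x,z)`: the number of edges of the multi-fan `F` joining `x` and `z`. -/
noncomputable def multAt (F : MultiFan G k D c x e₀ y₀) (z : G.V) : ℕ :=
  Nat.card {j : Fin (F.p + 1) // F.vx j = z}

end MultiFan

end Multigraph

namespace Multigraph

variable {G : Multigraph}

/-! ### Basics about ends -/

lemma ends_exists_pair (e : G.E) : ∃ a b : G.V, a ≠ b ∧ G.ends e = s(a, b) := by
  rcases Quot.exists_rep (G.ends e) with ⟨⟨a, b⟩, h⟩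
  refine ⟨a, b, ?_, h.symm⟩
  intro hab
  exact G.loopless e (by rw [← h, hab]; exact Sym2.mk_isDiag_iff.2 rfl)

lemma exists_other {e : G.E} {x : G.V} (h : x ∈ G.ends e) :
    ∃ y, y ≠ x ∧ G.ends e = s(x, y) := by
  rcases ends_exists_pair e with ⟨a, b, hab, hε⟩
  rw [hε, Sym2.mem_iff] at h
  rcases h with rfl | rfl
  · exact ⟨b, fun hb => hab hb.symm, hε⟩
  · exact ⟨a, hab, hε.trans (Sym2.eq_swap)⟩

lemma ne_of_ends_eq {e : G.E} {x y : G.V} (h : G.ends e = s(x, y)) : x ≠ y := by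
  intro hxy
  exact G.loopless e (by rw [h, hxy]; exact Sym2.mk_isDiag_iff.2 rfl)

/-! ### Basics about colorings and missing sets -/

section Coloring

variable {k : ℕ} {D : Set G.E} {c : G.E → ℕ}

lemma IsProperColoringOn.color_inj (hc : G.IsProperColoringOn k D c) {v : G.V} {e f : G.E}
    (he : e ∈ D) (hf : f ∈ D) (hve : v ∈ G.ends e) (hvf : v ∈ G.ends f)
    (hcc : c e = c f) : e = f := by
  by_contra hne
  exact hc.2 e he f hf hne ⟨v, hve, hvf⟩ hcc

lemma missingOn_subset_Icc (v : G.V) : G.missingOn k D c v ⊆ Set.Icc 1 k :=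
  fun _ hi => hi.1

lemma not_mem_missingOn_iff {v : G.V} {i : ℕ} (hik : i ∈ Set.Icc 1 k) :
    i ∉ G.missingOn k D c v ↔ ∃ e ∈ D, v ∈ G.ends e ∧ c e = i := by
  unfold missingOn
  simp only [Set.mem_setOf_eq, not_and, not_forall]
  constructor
  · intro h
    rcases h hik with ⟨e, he, hv, hne⟩
    exact ⟨e, he, hv, not_not.1 hne⟩
  · rintro ⟨e, he, hv, hci⟩ _
    exact ⟨e, he, hv, not_not.2 hci⟩

/-- The number of missing colors at `v` is at least `k` minus the number of colored
edges at `v`. -/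
lemma le_ncard_missingOn (v : G.V) :
    k ≤ G.degreeOn D v + (G.missingOn k D c v).ncard := by
  classical
  have hP : G.missingOn k D c v = Set.Icc 1 k \ (c '' {e : G.E | e ∈ D ∧ v ∈ G.ends e}) := by
    ext i
    simp only [missingOn, Set.mem_setOf_eq, Set.mem_diff, Set.mem_image, not_exists]
    constructor
    · rintro ⟨hik, h⟩
      exact ⟨hik, by rintro e ⟨⟨he, hv⟩, hci⟩; exact h e he hv hci⟩
    · rintro ⟨hik, h⟩
      exact ⟨hik, fun e he hv hci => h e ⟨⟨he, hv⟩, hci⟩⟩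
  have h1 : (Set.Icc (1:ℕ) k).ncard = k := by
    rw [← Nat.card_coe_set_eq, Nat.card_eq_card_toFinset]
    simp [Set.toFinset_Icc]
  have h2 : (c '' {e : G.E | e ∈ D ∧ v ∈ G.ends e}).ncard ≤ G.degreeOn D v :=
    Set.ncard_image_le (Set.toFinite _)
  have h3 : Set.Icc (1:ℕ) k ⊆ G.missingOn k D c v ∪ (c '' {e : G.E | e ∈ D ∧ v ∈ G.ends e}) := by
    intro i hi
    by_cases hm : i ∈ G.missingOn k D c v
    · exact Or.inl hm
    · rw [hP] at hm
      simp only [Set.mem_diff, not_and, not_not] at hm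
      exact Or.inr (hm hi)
  have hfin : (G.missingOn k D c v ∪ (c '' {e : G.E | e ∈ D ∧ v ∈ G.ends e})).Finite :=
    ((Set.finite_Icc (1:ℕ) k).subset (missingOn_subset_Icc v)).union ((Set.toFinite _).image c)
  calc k = (Set.Icc (1:ℕ) k).ncard := h1.symm
    _ ≤ (G.missingOn k D c v ∪ (c '' {e : G.E | e ∈ D ∧ v ∈ G.ends e})).ncard :=
        Set.ncard_le_ncard h3 hfin
    _ ≤ (G.missingOn k D c v).ncard + (c '' {e : G.E | e ∈ D ∧ v ∈ G.ends e}).ncard :=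
        Set.ncard_union_le _ _
    _ ≤ G.degreeOn D v + (G.missingOn k D c v).ncard := by omega

end Coloring

end Multigraph

namespace Multigraph

variable {G : Multigraph}

lemma ends_eq_of_mem_mem {e : G.E} {a b : G.V} (ha : a ∈ G.ends e) (hb : b ∈ G.ends e)
    (hab : a ≠ b) : G.ends e = s(a, b) := by
  rcases ends_exists_pair e with ⟨p, q, hpq, hε⟩
  rw [hε, Sym2.mem_iff] at ha hb
  rw [hε]
  rcases ha with rfl | rfl <;> rcases hb with rfl | rfl
  · exact absurd rfl hab
  · rfl
  · exact Sym2.eq_swap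
  · exact absurd rfl hab

/-! ### Chain components -/

/-- One step along an edge of `E₀`. -/
def chainRel (E₀ : Set G.E) (a b : G.V) : Prop := ∃ e ∈ E₀, G.ends e = s(a, b)

lemma chainRel_symm (E₀ : Set G.E) : Symmetric (chainRel (G := G) E₀) := by
  rintro a b ⟨e, he, hε⟩
  exact ⟨e, he, hε.trans Sym2.eq_swap⟩

/-- The set of vertices joined to `x` by a chain of `E₀`-edges. -/
def comp (E₀ : Set G.E) (x : G.V) : Set G.V :=
  {y | Relation.ReflTransGen (chainRel (G := G) E₀) x y}

lemma comp_refl (E₀ : Set G.E) (x : G.V) : x ∈ comp E₀ x := Relation.ReflTransGen.refl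

lemma comp_symm {E₀ : Set G.E} {x y : G.V} (h : y ∈ comp E₀ x) : x ∈ comp E₀ y :=
  by
    haveI : Std.Symm (chainRel (G := G) E₀) := ⟨fun a b hab => chainRel_symm E₀ hab⟩
    exact Std.Symm.symm _ _ h

lemma comp_trans {E₀ : Set G.E} {x y z : G.V} (h : y ∈ comp E₀ x) (h' : z ∈ comp E₀ y) :
    z ∈ comp E₀ x := Relation.ReflTransGen.trans h h'

lemma comp_mono {E₀ E₁ : Set G.E} (hE : E₁ ⊆ E₀) {x : G.V} :
    comp E₁ x ⊆ comp E₀ x := fun _ h =>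
  Relation.ReflTransGen.mono (r := chainRel (G := G) E₁) (p := chainRel (G := G) E₀)
    (fun _ _ hab => by obtain ⟨e, he, hε⟩ := hab; exact ⟨e, hE he, hε⟩) _ _ h

lemma comp_step_closed {E₀ : Set G.E} {w : G.V} {e : G.E} (he : e ∈ E₀) {a : G.V}
    (ha : a ∈ comp E₀ w) (hae : a ∈ G.ends e) : ∀ b ∈ G.ends e, b ∈ comp E₀ w := by
  intro b hb
  by_cases hab : a = b
  · exact hab ▸ ha
  · exact Relation.ReflTransGen.tail ha ⟨e, he, ends_eq_of_mem_mem hae hb hab⟩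

/-- A connected multigraph has at least `n - 1` edges. -/
lemma comp_ncard_le (n : ℕ) : ∀ (E₀ : Set G.E), E₀.ncard = n → ∀ x : G.V,
    (comp E₀ x).ncard ≤ {e | e ∈ E₀ ∧ ∃ y ∈ G.ends e, y ∈ comp E₀ x}.ncard + 1 := by
  induction n using Nat.strong_induction_on with
  | _ n ih =>
  intro E₀ hn x
  by_cases hS : comp E₀ x ⊆ {x}
  · calc (comp E₀ x).ncard ≤ ({x} : Set G.V).ncard :=
          Set.ncard_le_ncard hS (Set.finite_singleton x)
      _ = 1 := Set.ncard_singleton x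
      _ ≤ _ := le_add_self
  · rw [Set.not_subset] at hS
    obtain ⟨y, hy, hyx⟩ := hS
    have hxy : x ≠ y := fun h => hyx (by simp [← h])
    obtain ⟨e', ⟨estar, hestar, hends⟩, -⟩ :=
      (Relation.ReflTransGen.cases_head hy).resolve_left (fun h => hxy h)
    -- `estar` is an edge of `E₀` with ends `s(x, e')`
    set x' := e' with hx'
    set E₁ := E₀ \ {estar} with hE₁
    have hE₁card : E₁.ncard < n := by
      rw [← hn]
      exact Set.ncard_diff_singleton_lt_of_mem hestar (Set.toFinite _)
    set S₁ := comp E₁ x with hS₁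
    set S₂ := comp E₁ x' with hS₂
    have hsub : comp E₀ x ⊆ S₁ ∪ S₂ := by
      intro z hz
      induction hz with
      | refl => exact Or.inl (comp_refl _ _)
      | @tail b c hxb hbc ihz =>
        rcases hbc with ⟨e, heE, hεe⟩
        by_cases hee : e = estar
        · subst hee
          rw [hends] at hεe
          rcases Sym2.eq_iff.1 hεe with ⟨h1, h2⟩ | ⟨h1, h2⟩
          · exact Or.inr (by rw [← h2]; exact comp_refl _ _)
          · exact Or.inl (by rw [← h1]; exact comp_refl _ _)
        · have heE₁ : e ∈ E₁ := ⟨heE, hee⟩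
          rcases ihz with hb | hb
          · exact Or.inl (Relation.ReflTransGen.tail hb ⟨e, heE₁, hεe⟩)
          · exact Or.inr (Relation.ReflTransGen.tail hb ⟨e, heE₁, hεe⟩)
    have hS₁sub : S₁ ⊆ comp E₀ x := comp_mono Set.diff_subset
    have hx'comp : x' ∈ comp E₀ x :=
      Relation.ReflTransGen.single ⟨estar, hestar, hends⟩
    have hS₂sub : S₂ ⊆ comp E₀ x := fun z hz =>
      comp_trans hx'comp (comp_mono Set.diff_subset hz)
    set T := {e | e ∈ E₀ ∧ ∃ y ∈ G.ends e, y ∈ comp E₀ x} with hT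
    have ihS₁ := ih E₁.ncard hE₁card E₁ rfl x
    have ihS₂ := ih E₁.ncard hE₁card E₁ rfl x'
    by_cases hxx' : x' ∈ S₁
    · -- same component
      have hsub' : comp E₀ x ⊆ S₁ := by
        intro z hz
        rcases hsub hz with h | h
        · exact h
        · exact comp_trans hxx' h
      have hTsub : {e | e ∈ E₁ ∧ ∃ y ∈ G.ends e, y ∈ S₁} ⊆ T := by
        rintro e ⟨he, y, hy, hyS⟩
        exact ⟨he.1, y, hy, hS₁sub hyS⟩
      calc (comp E₀ x).ncard ≤ S₁.ncard := Set.ncard_le_ncard hsub' (Set.toFinite _)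
        _ ≤ {e | e ∈ E₁ ∧ ∃ y ∈ G.ends e, y ∈ S₁}.ncard + 1 := ihS₁
        _ ≤ T.ncard + 1 := by
            exact Nat.add_le_add_right (Set.ncard_le_ncard hTsub (Set.toFinite _)) 1
    · -- different components
      have hdisj : S₁ ∩ S₂ = ∅ := by
        ext z
        simp only [Set.mem_inter_iff, Set.mem_empty_iff_false, iff_false, not_and]
        intro hz1 hz2
        exact hxx' (comp_trans hz1 (comp_symm hz2))
      set T₁ := {e | e ∈ E₁ ∧ ∃ y ∈ G.ends e, y ∈ S₁} with hT₁
      set T₂ := {e | e ∈ E₁ ∧ ∃ y ∈ G.ends e, y ∈ S₂} with hT₂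
      have hT₁₂ : Disjoint T₁ T₂ := by
        rw [Set.disjoint_iff_inter_eq_empty]
        ext e
        simp only [Set.mem_inter_iff, Set.mem_empty_iff_false, iff_false, not_and]
        rintro ⟨he, y₁, hy₁, hy₁S⟩ ⟨-, y₂, hy₂, hy₂S⟩
        have : y₂ ∈ S₁ := comp_step_closed he hy₁S hy₁ y₂ hy₂
        have : y₂ ∈ S₁ ∩ S₂ := ⟨this, hy₂S⟩
        rw [hdisj] at this
        exact this
      have hTT : T₁ ∪ T₂ ⊆ T \ {estar} := by
        rintro e (⟨he, y, hy, hyS⟩ | ⟨he, y, hy, hyS⟩)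
        · exact ⟨⟨he.1, y, hy, hS₁sub hyS⟩, he.2⟩
        · exact ⟨⟨he.1, y, hy, hS₂sub hyS⟩, he.2⟩
      have hestarT : estar ∈ T := by
        refine ⟨hestar, x, ?_, comp_refl _ _⟩
        rw [hends]; exact Sym2.mem_mk_left _ _
      calc (comp E₀ x).ncard ≤ (S₁ ∪ S₂).ncard := Set.ncard_le_ncard hsub (Set.toFinite _)
        _ ≤ S₁.ncard + S₂.ncard := Set.ncard_union_le _ _
        _ ≤ (T₁.ncard + 1) + (T₂.ncard + 1) := Nat.add_le_add ihS₁ ihS₂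
        _ = (T₁ ∪ T₂).ncard + 2 := by
            rw [Set.ncard_union_eq hT₁₂ (Set.toFinite _) (Set.toFinite _)]; ring
        _ ≤ (T \ {estar}).ncard + 2 := by
            exact Nat.add_le_add_right (Set.ncard_le_ncard hTT (Set.toFinite _)) 2
        _ ≤ T.ncard + 1 := by
            have := Set.ncard_diff_singleton_add_one hestarT (Set.toFinite _)
            omega

end Multigraph

namespace Multigraph

variable {G : Multigraph}

open Classical in
/-- Handshake: if every edge of `T` has both (distinct) ends in `S`, then the sum of the
`T`-degrees over `S` is twice `|T|`. -/
lemma handshake (T : Set G.E) (S : Set G.V)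
    (h2 : ∀ e ∈ T, ∀ y ∈ G.ends e, y ∈ S) :
    2 * T.ncard = ∑ y ∈ S.toFinset, {e | e ∈ T ∧ y ∈ G.ends e}.ncard := by
  classical
  have hcard : ∀ y : G.V, {e | e ∈ T ∧ y ∈ G.ends e}.ncard
      = (T.toFinset.filter (fun e => y ∈ G.ends e)).card := by
    intro y
    rw [← Set.ncard_coe_finset]
    congr 1
    ext e
    simp [Set.mem_toFinset]
  have hper : ∀ e ∈ T.toFinset, (S.toFinset.filter (fun y => y ∈ G.ends e)).card = 2 := by
    intro e he
    rw [Set.mem_toFinset] at he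
    rcases ends_exists_pair e with ⟨a, b, hab, hε⟩
    have ha : a ∈ S := h2 e he a (by rw [hε]; exact Sym2.mem_mk_left _ _)
    have hb : b ∈ S := h2 e he b (by rw [hε]; exact Sym2.mem_mk_right _ _)
    have hfe : S.toFinset.filter (fun y => y ∈ G.ends e) = {a, b} := by
      ext y
      simp only [Finset.mem_filter, Set.mem_toFinset, Finset.mem_insert,
        Finset.mem_singleton, hε, Sym2.mem_iff]
      constructor
      · rintro ⟨-, h⟩; exact h
      · rintro (rfl | rfl)
        · exact ⟨ha, Or.inl rfl⟩
        · exact ⟨hb, Or.inr rfl⟩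
    rw [hfe, Finset.card_insert_of_notMem (by simpa using hab), Finset.card_singleton]
  calc 2 * T.ncard = ∑ _e ∈ T.toFinset, 2 := by
        rw [Finset.sum_const, smul_eq_mul, ← Set.ncard_coe_finset, Set.coe_toFinset, mul_comm]
    _ = ∑ e ∈ T.toFinset, (S.toFinset.filter (fun y => y ∈ G.ends e)).card :=
        (Finset.sum_congr rfl hper).symm
    _ = ∑ y ∈ S.toFinset, (T.toFinset.filter (fun e => y ∈ G.ends e)).card := by
        simp only [Finset.card_filter]
        exact Finset.sum_comm
    _ = ∑ y ∈ S.toFinset, {e | e ∈ T ∧ y ∈ G.ends e}.ncard := by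
        exact Finset.sum_congr rfl (fun y _ => (hcard y).symm)

section Endgame

variable {k : ℕ} {D : Set G.E} {c : G.E → ℕ}

lemma ncard_color_edges_le_one (hc : G.IsProperColoringOn k D c) (y : G.V) (γ : ℕ) :
    {e | e ∈ D ∧ y ∈ G.ends e ∧ c e = γ}.ncard ≤ 1 := by
  rw [Set.ncard_le_one (Set.toFinite _)]
  rintro e ⟨he, hye, hce⟩ f ⟨hf, hyf, hcf⟩
  exact hc.color_inj he hf hye hyf (hce.trans hcf.symm)

/-- At a vertex missing `β`, there is at most one `{α,β}`-colored edge. -/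
lemma degE_le_two (hc : G.IsProperColoringOn k D c) (α β : ℕ) {T : Set G.E}
    (hT : T ⊆ {e | e ∈ D ∧ (c e = α ∨ c e = β)}) (y : G.V) :
    {e | e ∈ T ∧ y ∈ G.ends e}.ncard ≤ 2 := by
  have hsub : {e | e ∈ T ∧ y ∈ G.ends e} ⊆
      {e | e ∈ D ∧ y ∈ G.ends e ∧ c e = α} ∪ {e | e ∈ D ∧ y ∈ G.ends e ∧ c e = β} := by
    rintro e ⟨heT, hy⟩
    rcases hT heT with ⟨heD, hcol | hcol⟩
    · exact Or.inl ⟨heD, hy, hcol⟩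
    · exact Or.inr ⟨heD, hy, hcol⟩
  calc {e | e ∈ T ∧ y ∈ G.ends e}.ncard
      ≤ _ := Set.ncard_le_ncard hsub (Set.toFinite _)
    _ ≤ {e | e ∈ D ∧ y ∈ G.ends e ∧ c e = α}.ncard
        + {e | e ∈ D ∧ y ∈ G.ends e ∧ c e = β}.ncard := Set.ncard_union_le _ _
    _ ≤ 2 := by
        have := ncard_color_edges_le_one hc y α
        have := ncard_color_edges_le_one hc y β
        omega

lemma degE_le_one (hc : G.IsProperColoringOn k D c) {α : ℕ} (β : ℕ) {T : Set G.E}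
    (hT : T ⊆ {e | e ∈ D ∧ (c e = α ∨ c e = β)}) {y : G.V}
    (hy : ∀ e ∈ D, y ∈ G.ends e → c e ≠ α) :
    {e | e ∈ T ∧ y ∈ G.ends e}.ncard ≤ 1 := by
  have hsub : {e | e ∈ T ∧ y ∈ G.ends e} ⊆ {e | e ∈ D ∧ y ∈ G.ends e ∧ c e = β} := by
    rintro e ⟨heT, hye⟩
    rcases hT heT with ⟨heD, hcol | hcol⟩
    · exact absurd hcol (hy e heD hye)
    · exact ⟨heD, hye, hcol⟩
  exact le_trans (Set.ncard_le_ncard hsub (Set.toFinite _)) (ncard_color_edges_le_one hc y β)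

/-- The three-endpoint lemma: `x` (missing `α`) and `u, v` (both missing `β`) cannot all
lie on one `(α,β)`-chain. -/
lemma not_both_in_comp (hc : G.IsProperColoringOn k D c) {α β : ℕ} {x u v : G.V}
    (hxu : x ≠ u) (hxv : x ≠ v) (huv : u ≠ v)
    (hα : ∀ e ∈ D, x ∈ G.ends e → c e ≠ α)
    (hβu : ∀ e ∈ D, u ∈ G.ends e → c e ≠ β)
    (hβv : ∀ e ∈ D, v ∈ G.ends e → c e ≠ β) :
    ¬(u ∈ comp {e | e ∈ D ∧ (c e = α ∨ c e = β)} x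
      ∧ v ∈ comp {e | e ∈ D ∧ (c e = α ∨ c e = β)} x) := by
  classical
  rintro ⟨hu, hv⟩
  set E₀ := {e | e ∈ D ∧ (c e = α ∨ c e = β)} with hE₀
  set S := comp E₀ x with hS
  set T := {e | e ∈ E₀ ∧ ∃ y ∈ G.ends e, y ∈ S} with hT
  have hboth : ∀ e ∈ T, ∀ y ∈ G.ends e, y ∈ S := by
    rintro e ⟨heE, y₀, hy₀, hy₀S⟩ y hy
    exact comp_step_closed heE hy₀S hy₀ y hy
  have hcount := handshake T S hboth
  have hCB := comp_ncard_le E₀.ncard E₀ rfl x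
  have hTsub : T ⊆ E₀ := fun e he => he.1
  -- degree bounds
  have hdeg2 : ∀ y : G.V, {e | e ∈ T ∧ y ∈ G.ends e}.ncard ≤ 2 :=
    degE_le_two hc α β hTsub
  have hdx : {e | e ∈ T ∧ x ∈ G.ends e}.ncard ≤ 1 := degE_le_one hc β hTsub hα
  have hβswap : T ⊆ {e | e ∈ D ∧ (c e = β ∨ c e = α)} := by
    rintro e he
    rcases hTsub he with ⟨heD, h | h⟩
    · exact ⟨heD, Or.inr h⟩
    · exact ⟨heD, Or.inl h⟩
  have hdu : {e | e ∈ T ∧ u ∈ G.ends e}.ncard ≤ 1 := degE_le_one hc α hβswap hβu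
  have hdv : {e | e ∈ T ∧ v ∈ G.ends e}.ncard ≤ 1 := degE_le_one hc α hβswap hβv
  -- sum estimate
  have hxS : x ∈ S.toFinset := by rw [Set.mem_toFinset]; exact comp_refl _ _
  have huS : u ∈ S.toFinset := by rw [Set.mem_toFinset]; exact hu
  have hvS : v ∈ S.toFinset := by rw [Set.mem_toFinset]; exact hv
  set d : G.V → ℕ := fun y => {e | e ∈ T ∧ y ∈ G.ends e}.ncard with hd
  have hCB' : S.ncard ≤ T.ncard + 1 := hCB
  have hdx' : d x ≤ 1 := hdx
  have hdu' : d u ≤ 1 := hdu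
  have hdv' : d v ≤ 1 := hdv
  have hdeg2' : ∀ y, d y ≤ 2 := fun y => hdeg2 y
  have hsplit : S.toFinset = ({x, u, v} : Finset G.V) ∪ (S.toFinset \ {x, u, v}) := by
    ext y
    simp only [Finset.mem_union, Finset.mem_sdiff, Finset.mem_insert, Finset.mem_singleton]
    constructor
    · intro hy
      by_cases h : y = x ∨ y = u ∨ y = v
      · exact Or.inl h
      · exact Or.inr ⟨hy, h⟩
    · rintro (h | ⟨hy, -⟩)
      · rcases h with rfl | rfl | rfl <;> assumption
      · exact hy
  have hsub3 : ({x, u, v} : Finset G.V) ⊆ S.toFinset := by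
    intro y hy
    simp only [Finset.mem_insert, Finset.mem_singleton] at hy
    rcases hy with rfl | rfl | rfl <;> assumption
  have hsum : ∑ y ∈ S.toFinset, d y ≤ 3 + 2 * (S.toFinset.card - 3) := by
    have h0 : ∑ y ∈ S.toFinset, d y
        = ∑ y ∈ ({x, u, v} : Finset G.V), d y + ∑ y ∈ (S.toFinset \ {x, u, v}), d y := by
      rw [← Finset.sum_union Finset.disjoint_sdiff, ← hsplit]
    rw [h0]
    have h3 : ∑ y ∈ ({x, u, v} : Finset G.V), d y ≤ 3 := by
      rw [Finset.sum_insert (by simp [hxu, hxv]), Finset.sum_insert (by simp [huv]),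
        Finset.sum_singleton]
      omega
    have hrest : ∑ y ∈ (S.toFinset \ {x, u, v}), d y ≤ (S.toFinset \ {x, u, v}).card * 2 := by
      have := Finset.sum_le_card_nsmul (S.toFinset \ {x, u, v}) d 2 (fun y _ => hdeg2 y)
      simpa [smul_eq_mul] using this
    have hcard3 : ({x, u, v} : Finset G.V).card = 3 := by
      rw [Finset.card_insert_of_notMem (by simp [hxu, hxv]),
        Finset.card_insert_of_notMem (by simp [huv]), Finset.card_singleton]
    have hcards : (S.toFinset \ {x, u, v}).card = S.toFinset.card - 3 := by
      rw [Finset.card_sdiff_of_subset hsub3, hcard3]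
    omega
  have hScard : S.ncard = S.toFinset.card := by
    rw [← Set.ncard_coe_finset]; congr 1; ext y; simp [Set.mem_toFinset]
  have hScard3 : 3 ≤ S.toFinset.card := by
    calc 3 = ({x, u, v} : Finset G.V).card := by
          rw [Finset.card_insert_of_notMem (by simp [hxu, hxv]),
            Finset.card_insert_of_notMem (by simp [huv]), Finset.card_singleton]
      _ ≤ S.toFinset.card := Finset.card_le_card hsub3
  -- combine
  rw [← hcount] at hsum
  -- 2|T| ≤ 3 + 2(|S|-3) = 2|S| - 3, and |S| ≤ |T| + 1
  omega

end Endgame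

end Multigraph

namespace Multigraph

variable {G : Multigraph}

/-! ### Kempe chain swaps -/

/-- The edges of `D` colored `α` or `β`. -/
def kedges (D : Set G.E) (c : G.E → ℕ) (α β : ℕ) : Set G.E :=
  {e | e ∈ D ∧ (c e = α ∨ c e = β)}

/-- The edges of the `(α,β)`-chain through `w`. -/
def swapped (D : Set G.E) (c : G.E → ℕ) (α β : ℕ) (w : G.V) : Set G.E :=
  {e | e ∈ kedges D c α β ∧ ∃ y ∈ G.ends e, y ∈ comp (kedges D c α β) w}

open Classical in
/-- The coloring obtained by interchanging `α` and `β` on the `(α,β)`-chain through `w`. -/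
noncomputable def swapColor (D : Set G.E) (c : G.E → ℕ) (α β : ℕ) (w : G.V) : G.E → ℕ :=
  fun e => if e ∈ swapped D c α β w then (if c e = α then β else α) else c e

section Swap

variable {k : ℕ} {D : Set G.E} {c : G.E → ℕ} {α β : ℕ} {w : G.V}

lemma swapped_ends {e : G.E} (he : e ∈ swapped D c α β w) :
    ∀ y ∈ G.ends e, y ∈ comp (kedges (G := G) D c α β) w := by
  obtain ⟨hek, y₀, hy₀, hy₀c⟩ := he
  exact comp_step_closed hek hy₀c hy₀

lemma swapColor_of_not_mem {e : G.E} (he : e ∉ swapped D c α β w) :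
    swapColor D c α β w e = c e := if_neg he

lemma swapColor_of_alpha (hαβ : α ≠ β) {e : G.E} (he : e ∈ swapped D c α β w)
    (hce : c e = α) : swapColor D c α β w e = β := by
  rw [swapColor, if_pos he, if_pos hce]

lemma swapColor_of_beta (hαβ : α ≠ β) {e : G.E} (he : e ∈ swapped D c α β w)
    (hce : c e = β) : swapColor D c α β w e = α := by
  rw [swapColor, if_pos he, if_neg (by rw [hce]; exact fun h => hαβ h.symm)]

lemma swapColor_proper (hc : G.IsProperColoringOn k D c) (hαβ : α ≠ β)
    (hα : α ∈ Set.Icc 1 k) (hβ : β ∈ Set.Icc 1 k) :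
    G.IsProperColoringOn k D (swapColor D c α β w) := by
  constructor
  · intro e he
    by_cases hsw : e ∈ swapped D c α β w
    · rcases hsw.1.2 with hce | hce
      · rw [swapColor_of_alpha hαβ hsw hce]; exact hβ
      · rw [swapColor_of_beta hαβ hsw hce]; exact hα
    · rw [swapColor_of_not_mem hsw]; exact hc.1 e he
  · rintro e he f hf hef ⟨v, hve, hvf⟩ hcc
    by_cases hse : e ∈ swapped D c α β w <;> by_cases hsf : f ∈ swapped D c α β w
    · -- both swapped
      have hech := hse.1.2
      have hfch := hsf.1.2
      have : c e = c f := by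
        rcases hech with h1 | h1 <;> rcases hfch with h2 | h2
        · rw [h1, h2]
        · rw [swapColor_of_alpha hαβ hse h1, swapColor_of_beta hαβ hsf h2] at hcc
          exact absurd hcc.symm hαβ
        · rw [swapColor_of_beta hαβ hse h1, swapColor_of_alpha hαβ hsf h2] at hcc
          exact absurd hcc hαβ
        · rw [h1, h2]
      exact hc.2 e he f hf hef ⟨v, hve, hvf⟩ this
    · -- e swapped, f not
      have hvcomp : v ∈ comp (kedges (G := G) D c α β) w := swapped_ends hse v hve
      have hcf : c f ≠ α ∧ c f ≠ β := by
        constructor <;> intro h <;>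
          exact hsf ⟨⟨hf, by rw [h]; tauto⟩, v, hvf, hvcomp⟩
      rw [swapColor_of_not_mem hsf] at hcc
      rcases hse.1.2 with h1 | h1
      · rw [swapColor_of_alpha hαβ hse h1] at hcc; exact hcf.2 hcc.symm
      · rw [swapColor_of_beta hαβ hse h1] at hcc; exact hcf.1 hcc.symm
    · -- f swapped, e not
      have hvcomp : v ∈ comp (kedges (G := G) D c α β) w := swapped_ends hsf v hvf
      have hce : c e ≠ α ∧ c e ≠ β := by
        constructor <;> intro h <;>
          exact hse ⟨⟨he, by rw [h]; tauto⟩, v, hve, hvcomp⟩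
      rw [swapColor_of_not_mem hse] at hcc
      rcases hsf.1.2 with h1 | h1
      · rw [swapColor_of_alpha hαβ hsf h1] at hcc; exact hce.2 hcc
      · rw [swapColor_of_beta hαβ hsf h1] at hcc; exact hce.1 hcc
    · rw [swapColor_of_not_mem hse, swapColor_of_not_mem hsf] at hcc
      exact hc.2 e he f hf hef ⟨v, hve, hvf⟩ hcc

/-- Missing sets are unchanged at vertices outside the chain. -/
lemma swapColor_missing_of_not_comp {y : G.V}
    (hy : y ∉ comp (kedges (G := G) D c α β) w) :
    G.missingOn k D (swapColor D c α β w) y = G.missingOn k D c y := by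
  ext i
  simp only [missingOn, Set.mem_setOf_eq]
  have key : ∀ e ∈ D, y ∈ G.ends e → swapColor D c α β w e = c e := by
    intro e heD hye
    refine swapColor_of_not_mem (fun hsw => hy ?_)
    exact swapped_ends hsw y hye
  constructor
  · rintro ⟨hik, h⟩
    exact ⟨hik, fun e heD hye => by rw [← key e heD hye]; exact h e heD hye⟩
  · rintro ⟨hik, h⟩
    exact ⟨hik, fun e heD hye => by rw [key e heD hye]; exact h e heD hye⟩

/-- Missing statuses of colors other than `α, β` are unchanged everywhere. -/
lemma swapColor_missing_other {γ : ℕ} (hγα : γ ≠ α) (hγβ : γ ≠ β) (y : G.V) :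
    γ ∈ G.missingOn k D (swapColor D c α β w) y ↔ γ ∈ G.missingOn k D c y := by
  simp only [missingOn, Set.mem_setOf_eq]
  have key : ∀ e : G.E, swapColor D c α β w e = γ ↔ c e = γ := by
    intro e
    by_cases hsw : e ∈ swapped D c α β w
    · constructor
      · intro h
        exfalso
        rcases hsw.1.2 with h1 | h1
        · rw [swapColor, if_pos hsw, if_pos h1] at h; exact hγβ h.symm
        · rw [swapColor, if_pos hsw] at h
          by_cases h2 : c e = α
          · rw [if_pos h2] at h; exact hγβ h.symm
          · rw [if_neg h2] at h; exact hγα h.symm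
      · intro h
        exact absurd h (by rcases hsw.1.2 with h1 | h1 <;> rw [h1] <;>
          [exact fun hh => hγα hh.symm; exact fun hh => hγβ hh.symm])
    · rw [swapColor_of_not_mem hsw]
  constructor
  · rintro ⟨hik, h⟩
    exact ⟨hik, fun e heD hye hce => h e heD hye ((key e).2 hce)⟩
  · rintro ⟨hik, h⟩
    exact ⟨hik, fun e heD hye hce => h e heD hye ((key e).1 hce)⟩

/-- After the swap, `α` is missing at `w` if `β` was. -/
lemma swapColor_missing_alpha (hαβ : α ≠ β) (hα : α ∈ Set.Icc 1 k)
    (hw : β ∈ G.missingOn k D c w) :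
    α ∈ G.missingOn k D (swapColor D c α β w) w := by
  refine ⟨hα, fun e heD hwe hce => ?_⟩
  by_cases hsw : e ∈ swapped D c α β w
  · rcases hsw.1.2 with h1 | h1
    · rw [swapColor_of_alpha hαβ hsw h1] at hce; exact hαβ hce.symm
    · exact hw.2 e heD hwe h1
  · rw [swapColor_of_not_mem hsw] at hce
    exact hsw ⟨⟨heD, Or.inl hce⟩, w, hwe, comp_refl _ _⟩

end Swap

end Multigraph

namespace Multigraph

/-- A (sequential) Vizing fan at `x` with respect to the uncolored edge `e₀ ∈ E(x,y₀)`: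
a sequence of distinct edges of `W` at `x`, starting at `e₀`, such that the color of each
subsequent edge is missing at the previous fan vertex. -/
structure Fan (G : Multigraph) (k : ℕ) (W : Set G.E) (c : G.E → ℕ)
    (x : G.V) (e₀ : G.E) (y₀ : G.V) where
  p : ℕ
  f : ℕ → G.E
  z : ℕ → G.V
  f0 : f 0 = e₀
  z0 : z 0 = y₀
  mem : ∀ i ≤ p, f i ∈ W
  ends_eq : ∀ i ≤ p, G.ends (f i) = s(x, z i)
  inj : ∀ i ≤ p, ∀ j ≤ p, f i = f j → i = j
  cond : ∀ i < p, c (f (i + 1)) ∈ G.missingOn k (W \ {e₀}) c (z i)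

variable {G : Multigraph}

namespace Fan

variable {k : ℕ} {W : Set G.E} {c : G.E → ℕ} {x : G.V} {e₀ : G.E} {y₀ : G.V}

lemma f_mem_diff (F : Fan G k W c x e₀ y₀) {i : ℕ} (hi1 : 1 ≤ i) (hip : i ≤ F.p) :
    F.f i ∈ W \ {e₀} := by
  refine ⟨F.mem i hip, fun h => ?_⟩
  have h0 : F.f i = F.f 0 := by rw [F.f0]; exact h
  have := F.inj i hip 0 (Nat.zero_le _) h0
  omega

lemma z_ne_x (F : Fan G k W c x e₀ y₀) {i : ℕ} (hip : i ≤ F.p) : F.z i ≠ x :=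
  fun h => (ne_of_ends_eq (F.ends_eq i hip)) h.symm

lemma x_mem_ends (F : Fan G k W c x e₀ y₀) {i : ℕ} (hip : i ≤ F.p) : x ∈ G.ends (F.f i) := by
  rw [F.ends_eq i hip]; exact Sym2.mem_mk_left _ _

lemma z_mem_ends (F : Fan G k W c x e₀ y₀) {i : ℕ} (hip : i ≤ F.p) :
    F.z i ∈ G.ends (F.f i) := by
  rw [F.ends_eq i hip]; exact Sym2.mem_mk_right _ _

end Fan

section Rotation

variable {k : ℕ} {W : Set G.E} {x : G.V} {e₀ : G.E} {y₀ : G.V}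

/-- Shift-and-color: if some color is missing at both `x` and the last fan vertex, the
coloring can be extended to all of `W`. -/
lemma fan_rotate : ∀ (n : ℕ) (c : G.E → ℕ), G.IsProperColoringOn k (W \ {e₀}) c →
    ∀ F : Fan G k W c x e₀ y₀, F.p = n → ∀ γ ∈ G.missingOn k (W \ {e₀}) c x,
    γ ∈ G.missingOn k (W \ {e₀}) c (F.z F.p) → ∃ c', G.IsProperColoringOn k W c' := by
  classical
  intro n
  induction n with
  | zero =>
    intro c hc F hFp γ hγx hγz
    refine ⟨Function.update c e₀ γ, ?_, ?_⟩
    · intro e heW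
      by_cases he : e = e₀
      · rw [he, Function.update_self]; exact hγx.1
      · rw [Function.update_of_ne he]; exact hc.1 e ⟨heW, he⟩
    · rw [hFp] at hγz
      rw [F.z0] at hγz
      have hεe₀ : G.ends e₀ = s(x, y₀) := by
        have := F.ends_eq 0 (by omega); rwa [F.f0, F.z0] at this
      rintro e heW f hfW hef ⟨v, hve, hvf⟩
      by_cases he : e = e₀ <;> by_cases hf : f = e₀
      · exact absurd (he.trans hf.symm) hef
      · rw [he] at hve
        rw [he, Function.update_self, Function.update_of_ne hf]
        have hfD : f ∈ W \ {e₀} := ⟨hfW, hf⟩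
        rw [hεe₀, Sym2.mem_iff] at hve
        rcases hve with rfl | rfl
        · exact fun h => hγx.2 f hfD hvf h.symm
        · exact fun h => hγz.2 f hfD hvf h.symm
      · rw [hf] at hvf
        rw [hf, Function.update_self, Function.update_of_ne he]
        have heD : e ∈ W \ {e₀} := ⟨heW, he⟩
        rw [hεe₀, Sym2.mem_iff] at hvf
        rcases hvf with rfl | rfl
        · exact fun h => hγx.2 e heD hve h
        · exact fun h => hγz.2 e heD hve h
      · rw [Function.update_of_ne he, Function.update_of_ne hf]
        exact hc.2 e ⟨heW, he⟩ f ⟨hfW, hf⟩ hef ⟨v, hve, hvf⟩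
  | succ n ih =>
    intro c hc F hFp γ hγx hγz
    set e' := F.f (n + 1) with he'
    set γ' := c e' with hγ'
    have he'D : e' ∈ W \ {e₀} := F.f_mem_diff (by omega) (by omega)
    have hγ'z : γ' ∈ G.missingOn k (W \ {e₀}) c (F.z n) := by
      have := F.cond n (by omega); rwa [← he', ← hγ'] at this
    have hγ'Icc : γ' ∈ Set.Icc 1 k := hc.1 e' he'D
    have hγγ' : γ ≠ γ' := by
      intro h
      exact hγx.2 e' he'D (F.x_mem_ends (by omega)) (by rw [← hγ', h])
    set c₁ := Function.update c e' γ with hc₁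
    have hc₁e : ∀ e : G.E, e ≠ e' → c₁ e = c e := fun e he => Function.update_of_ne he _ _
    have hc₁e' : c₁ e' = γ := Function.update_self _ _ _
    -- c₁ is proper on W \ {e₀}
    have hγze' : γ ∈ G.missingOn k (W \ {e₀}) c (F.z (n+1)) := by rwa [hFp] at hγz
    have hc₁proper : G.IsProperColoringOn k (W \ {e₀}) c₁ := by
      constructor
      · intro e heD
        by_cases he : e = e'
        · rw [he, hc₁e']; exact hγx.1
        · rw [hc₁e e he]; exact hc.1 e heD
      · rintro e heD f hfD hef ⟨v, hve, hvf⟩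
        by_cases he : e = e' <;> by_cases hf : f = e'
        · exact absurd (he.trans hf.symm) hef
        · subst he
          rw [hc₁e', hc₁e f hf]
          have hvends : v ∈ G.ends e' := hve
          rw [F.ends_eq (n+1) (by omega), Sym2.mem_iff] at hvends
          rcases hvends with rfl | rfl
          · exact fun h => hγx.2 f hfD hvf h.symm
          · exact fun h => hγze'.2 f hfD hvf h.symm
        · subst hf
          rw [hc₁e', hc₁e e he]
          have hvends : v ∈ G.ends e' := hvf
          rw [F.ends_eq (n+1) (by omega), Sym2.mem_iff] at hvends
          rcases hvends with rfl | rfl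
          · exact fun h => hγx.2 e heD hve h
          · exact fun h => hγze'.2 e heD hve h
        · rw [hc₁e e he, hc₁e f hf]
          exact hc.2 e heD f hfD hef ⟨v, hve, hvf⟩
    -- missing sets under c₁
    have hmiss : ∀ (v : G.V) (δ : ℕ), δ ≠ γ → δ ∈ G.missingOn k (W \ {e₀}) c v →
        δ ∈ G.missingOn k (W \ {e₀}) c₁ v := by
      rintro v δ hδγ ⟨hδIcc, h⟩
      refine ⟨hδIcc, fun e heD hvee => ?_⟩
      by_cases he : e = e'
      · rw [he, hc₁e']; exact fun hh => hδγ hh.symm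
      · rw [hc₁e e he]; exact h e heD hvee
    -- the truncated fan is a fan for c₁
    have hfne : ∀ i ≤ n + 1, i ≠ n + 1 → F.f i ≠ e' :=
      fun i hi hin h => hin (F.inj i (by omega) (n+1) (by omega) h)
    have hcond' : ∀ i < n, c₁ (F.f (i + 1)) ∈ G.missingOn k (W \ {e₀}) c₁ (F.z i) := by
      intro i hin
      have hne : F.f (i+1) ≠ e' := hfne (i+1) (by omega) (by omega)
      rw [hc₁e _ hne]
      have hcond := F.cond i (by omega)
      refine hmiss _ _ ?_ hcond
      intro h
      exact hγx.2 (F.f (i+1)) (F.f_mem_diff (by omega) (by omega))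
        (F.x_mem_ends (by omega)) h
    let F' : Fan G k W c₁ x e₀ y₀ :=
      ⟨n, F.f, F.z, F.f0, F.z0,
        fun i hi => F.mem i (by omega),
        fun i hi => F.ends_eq i (by omega),
        fun i hi j hj h => F.inj i (by omega) j (by omega) h,
        hcond'⟩
    -- γ' is missing at x and at z n under c₁
    have hγ'x : γ' ∈ G.missingOn k (W \ {e₀}) c₁ x := by
      refine ⟨hγ'Icc, fun e heD hxe => ?_⟩
      by_cases he : e = e'
      · rw [he, hc₁e']; exact hγγ'
      · rw [hc₁e e he]
        exact hc.2 e heD e' he'D he ⟨x, hxe, F.x_mem_ends (by omega)⟩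
    have hγ'zn : γ' ∈ G.missingOn k (W \ {e₀}) c₁ (F.z n) := by
      rcases hγ'z with ⟨h1, h2⟩
      refine ⟨h1, fun e heD hze => ?_⟩
      by_cases he : e = e'
      · rw [he, hc₁e']; exact hγγ'
      · rw [hc₁e e he]; exact h2 e heD hze
    exact ih c₁ hc₁proper F' rfl γ' hγ'x hγ'zn

end Rotation

end Multigraph

namespace Multigraph

variable {G : Multigraph}

/-- **Vizing's extension lemma.** If `d(x) ≤ k`, and `d(z) + m(x,z) ≤ k` for every
neighbor `z` of `x`, then a `k`-coloring of `W \ {e₀}` (with `e₀` at `x`) can be turned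
into a `k`-coloring of `W`. -/
lemma extend_coloring {k : ℕ} {W : Set G.E} {x y₀ : G.V} {e₀ : G.E} {c : G.E → ℕ}
    (hc : G.IsProperColoringOn k (W \ {e₀}) c)
    (he₀W : e₀ ∈ W) (hεe₀ : G.ends e₀ = s(x, y₀))
    (hdx : G.degreeOn W x ≤ k)
    (hnb : ∀ z : G.V, (∃ f ∈ W, G.ends f = s(x, z)) → G.degreeOn W z + G.multOn W x z ≤ k) :
    ∃ c', G.IsProperColoringOn k W c' := by
  classical
  -- there is a fan, and fans are bounded
  have hA0 : ∃ F : Fan G k W c x e₀ y₀, F.p = 0 :=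
    ⟨⟨0, fun _ => e₀, fun _ => y₀, rfl, rfl, fun i _ => he₀W, fun i _ => hεe₀,
      fun i hi j hj _ => by omega, fun i hi => absurd hi (by omega)⟩, rfl⟩
  set A : Set ℕ := {p | ∃ F : Fan G k W c x e₀ y₀, F.p = p} with hA
  have hA0' : 0 ∈ A := hA0
  have hAbdd : BddAbove A := by
    refine ⟨Fintype.card G.E, fun p hp => ?_⟩
    obtain ⟨F, hF⟩ := hp
    have : Fintype.card (Fin (p + 1)) ≤ Fintype.card G.E := by
      refine Fintype.card_le_of_injective (fun i => F.f i) ?_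
      intro i j hij
      have := F.inj i (by omega : (i : ℕ) ≤ F.p) j (by omega : (j : ℕ) ≤ F.p) hij
      exact Fin.ext this
    rw [Fintype.card_fin] at this
    omega
  obtain ⟨F, hFp⟩ : sSup A ∈ A := Nat.sSup_mem ⟨0, hA0'⟩ hAbdd
  have hmaxA : ∀ q ∈ A, q ≤ F.p := fun q hq => hFp ▸ le_csSup hAbdd hq
  -- missing colors at x
  have hdegx : G.degreeOn (W \ {e₀}) x + 1 = G.degreeOn W x := by
    have hset : {e : G.E | e ∈ W \ {e₀} ∧ x ∈ G.ends e}
        = {e : G.E | e ∈ W ∧ x ∈ G.ends e} \ {e₀} := by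
      ext e
      simp only [Set.mem_setOf_eq, Set.mem_diff, Set.mem_singleton_iff]
      tauto
    rw [degreeOn, degreeOn, hset]
    exact Set.ncard_diff_singleton_add_one
      ⟨he₀W, by rw [hεe₀]; exact Sym2.mem_mk_left _ _⟩ (Set.toFinite _)
  have hMx : ∃ α, α ∈ G.missingOn k (W \ {e₀}) c x := by
    have h1 := le_ncard_missingOn (G := G) (k := k) (D := W \ {e₀}) (c := c) x
    have h2 : (G.missingOn k (W \ {e₀}) c x).ncard ≠ 0 := by omega
    exact (Set.nonempty_of_ncard_ne_zero h2).imp (fun a ha => ha)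
  obtain ⟨α, hα⟩ := hMx
  -- the last fan vertex
  set zp := F.z F.p with hzp
  have hfpW : F.f F.p ∈ W := F.mem _ le_rfl
  have hfpε : G.ends (F.f F.p) = s(x, zp) := F.ends_eq _ le_rfl
  have hnbzp := hnb zp ⟨F.f F.p, hfpW, hfpε⟩
  have hmzp : 1 ≤ G.multOn W x zp := by
    rw [multOn]
    rw [show (1 : ℕ) = ({F.f F.p} : Set G.E).ncard from (Set.ncard_singleton _).symm]
    exact Set.ncard_le_ncard (by simp [hfpW, hfpε]) (Set.toFinite _)
  have hdzp : G.degreeOn (W \ {e₀}) zp ≤ G.degreeOn W zp :=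
    Set.ncard_le_ncard (fun e he => ⟨he.1.1, he.2⟩) (Set.toFinite _)
  have hMzp : G.multOn W x zp ≤ (G.missingOn k (W \ {e₀}) c zp).ncard := by
    have h1 := le_ncard_missingOn (G := G) (k := k) (D := W \ {e₀}) (c := c) zp
    omega
  -- Case 1: a common missing color at x and zp
  by_cases hrot : ∃ γ, γ ∈ G.missingOn k (W \ {e₀}) c x ∧ γ ∈ G.missingOn k (W \ {e₀}) c zp
  · obtain ⟨γ, hγx, hγzp⟩ := hrot
    exact fan_rotate F.p c hc F rfl γ hγx hγzp
  push_neg at hrot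
  -- Case 2: the fan can be grown
  by_cases hgrow : ∃ γ ∈ G.missingOn k (W \ {e₀}) c zp, ∃ e ∈ W \ {e₀},
      x ∈ G.ends e ∧ c e = γ ∧ ∀ i ≤ F.p, F.f i ≠ e
  · exfalso
    obtain ⟨γ, hγzp, e, heD, hxe, hce, hfresh⟩ := hgrow
    obtain ⟨zg, hzgx, hεg⟩ := exists_other hxe
    have hnew : F.p + 1 ∈ A := by
      refine ⟨⟨F.p + 1, fun i => if i ≤ F.p then F.f i else e,
        fun i => if i ≤ F.p then F.z i else zg, ?_, ?_, ?_, ?_, ?_, ?_⟩, rfl⟩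
      · simp [Nat.zero_le, F.f0]
      · simp [Nat.zero_le, F.z0]
      · intro i hi
        by_cases h : i ≤ F.p
        · simpa [h] using F.mem i h
        · simpa [h] using heD.1
      · intro i hi
        by_cases h : i ≤ F.p
        · simpa [h] using F.ends_eq i h
        · simp only [h, if_neg, ite_false]
          exact hεg.trans (by rw [Sym2.eq_iff]; tauto)
      · intro i hi j hj hij
        have hij' : (if i ≤ F.p then F.f i else e) = (if j ≤ F.p then F.f j else e) := hij
        by_cases h1 : i ≤ F.p <;> by_cases h2 : j ≤ F.p
        · rw [if_pos h1, if_pos h2] at hij'; exact F.inj i h1 j h2 hij'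
        · rw [if_pos h1, if_neg h2] at hij'; exact absurd hij' (hfresh i h1)
        · rw [if_neg h1, if_pos h2] at hij'; exact absurd hij'.symm (hfresh j h2)
        · omega
      · intro i hi
        by_cases h : i < F.p
        · have h1 : i + 1 ≤ F.p := by omega
          have h2 : i ≤ F.p := by omega
          simpa [h1, h2] using F.cond i h
        · have h1 : i = F.p := by omega
          have h2 : ¬ (i + 1 ≤ F.p) := by omega
          have h3 : i ≤ F.p := by omega
          show c (if i + 1 ≤ F.p then F.f (i + 1) else e)
            ∈ G.missingOn k (W \ {e₀}) c (if i ≤ F.p then F.z i else zg)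
          rw [if_neg h2, if_pos h3, hce, h1]
          exact hγzp
    have := hmaxA _ hnew
    omega
  push_neg at hgrow
  -- every missing color at zp is the color of a nontrivial fan edge
  have hfan_edge : ∀ γ ∈ G.missingOn k (W \ {e₀}) c zp,
      ∃ j, 1 ≤ j ∧ j ≤ F.p ∧ c (F.f j) = γ := by
    intro γ hγ
    have hγIcc : γ ∈ Set.Icc 1 k := hγ.1
    have hγx : γ ∉ G.missingOn k (W \ {e₀}) c x := fun h => hrot γ h hγ
    rw [not_mem_missingOn_iff hγIcc] at hγx
    obtain ⟨e, heD, hxe, hce⟩ := hγx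
    obtain ⟨i, hip, hie⟩ := hgrow γ hγ e heD hxe hce
    have hi1 : 1 ≤ i := by
      rcases Nat.eq_zero_or_pos i with h0 | h1
      · exfalso
        rw [h0, F.f0] at hie
        exact heD.2 (by rw [← hie]; exact Set.mem_singleton _)
      · exact h1
    exact ⟨i, hi1, hip, by rw [hie]; exact hce⟩
  -- Case 3: all such fan edges return to zp (impossible by counting)
  by_cases hend : ∃ γ ∈ G.missingOn k (W \ {e₀}) c zp,
      ∃ j, 1 ≤ j ∧ j ≤ F.p ∧ c (F.f j) = γ ∧ F.z (j - 1) ≠ zp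
  · -- ENDGAME: Kempe chain swap
    obtain ⟨β, hβzp, j, hj1, hjp, hcfj, hzne⟩ := hend
    set u := F.z (j - 1) with hu
    have hβu : β ∈ G.missingOn k (W \ {e₀}) c u := by
      have h := F.cond (j - 1) (by omega)
      rw [Nat.sub_add_cancel hj1, hcfj] at h
      exact h
    have hβx : β ∉ G.missingOn k (W \ {e₀}) c x := fun h => hrot β h hβzp
    have hαβ : α ≠ β := fun h => hβx (h ▸ hα)
    have hux : u ≠ x := F.z_ne_x (by omega)
    have hvx : zp ≠ x := F.z_ne_x le_rfl
    have hnotboth := not_both_in_comp (α := α) (β := β) hc hux.symm hvx.symm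
      hzne hα.2 hβu.2 hβzp.2
    by_cases hucomp : u ∈ comp (kedges (W \ {e₀}) c α β) x
    · -- u is on the chain of x: swap the chain of zp and use the full fan
      have hvcomp : zp ∉ comp (kedges (W \ {e₀}) c α β) x := fun hv => hnotboth ⟨hucomp, hv⟩
      have hxv' : x ∉ comp (kedges (W \ {e₀}) c α β) zp := fun h => hvcomp (comp_symm h)
      have huv' : u ∉ comp (kedges (W \ {e₀}) c α β) zp :=
        fun h => hvcomp (comp_trans hucomp (comp_symm h))
      have hc₁ : G.IsProperColoringOn k (W \ {e₀}) (swapColor (W \ {e₀}) c α β zp) :=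
        swapColor_proper hc hαβ hα.1 hβzp.1
      have hfun : ∀ i ≤ F.p, swapColor (W \ {e₀}) c α β zp (F.f i) = c (F.f i) := by
        intro i hi
        refine swapColor_of_not_mem (fun hsw => hxv' ?_)
        exact swapped_ends hsw x (F.x_mem_ends hi)
      have hcond₁ : ∀ i < F.p, swapColor (W \ {e₀}) c α β zp (F.f (i + 1))
          ∈ G.missingOn k (W \ {e₀}) (swapColor (W \ {e₀}) c α β zp) (F.z i) := by
        intro i hi
        rw [hfun (i + 1) (by omega)]
        have hci := F.cond i hi
        by_cases hδα : c (F.f (i + 1)) = α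
        · exact absurd hδα
            (hα.2 (F.f (i + 1)) (F.f_mem_diff (by omega) (by omega)) (F.x_mem_ends (by omega)))
        by_cases hδβ : c (F.f (i + 1)) = β
        · have hje : F.f (i + 1) = F.f j :=
            hc.color_inj (F.f_mem_diff (by omega) (by omega)) (F.f_mem_diff hj1 hjp)
              (F.x_mem_ends (by omega)) (F.x_mem_ends hjp) (by rw [hδβ, hcfj])
          have hij : i + 1 = j := F.inj (i + 1) (by omega) j hjp hje
          have hzi : F.z i = u := by rw [hu]; congr 1; omega
          rw [hzi, hδβ, swapColor_missing_of_not_comp huv']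
          exact hβu
        · exact (swapColor_missing_other hδα hδβ (F.z i)).2 hci
      have hαx₁ : α ∈ G.missingOn k (W \ {e₀}) (swapColor (W \ {e₀}) c α β zp) x := by
        rw [swapColor_missing_of_not_comp hxv']; exact hα
      have hαv₁ : α ∈ G.missingOn k (W \ {e₀}) (swapColor (W \ {e₀}) c α β zp) zp :=
        swapColor_missing_alpha hαβ hα.1 hβzp
      exact fan_rotate F.p _ hc₁
        ⟨F.p, F.f, F.z, F.f0, F.z0, F.mem, F.ends_eq, F.inj, hcond₁⟩ rfl α hαx₁ hαv₁
    · -- u is not on the chain of x: swap the chain of u and use the fan up to u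
      have hxu' : x ∉ comp (kedges (W \ {e₀}) c α β) u := fun h => hucomp (comp_symm h)
      have hc₁ : G.IsProperColoringOn k (W \ {e₀}) (swapColor (W \ {e₀}) c α β u) :=
        swapColor_proper hc hαβ hα.1 hβzp.1
      have hfun : ∀ i ≤ F.p, swapColor (W \ {e₀}) c α β u (F.f i) = c (F.f i) := by
        intro i hi
        refine swapColor_of_not_mem (fun hsw => hxu' ?_)
        exact swapped_ends hsw x (F.x_mem_ends hi)
      have hcond₁ : ∀ i < j - 1, swapColor (W \ {e₀}) c α β u (F.f (i + 1))
          ∈ G.missingOn k (W \ {e₀}) (swapColor (W \ {e₀}) c α β u) (F.z i) := by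
        intro i hi
        rw [hfun (i + 1) (by omega)]
        have hci := F.cond i (by omega)
        by_cases hδα : c (F.f (i + 1)) = α
        · exact absurd hδα
            (hα.2 (F.f (i + 1)) (F.f_mem_diff (by omega) (by omega)) (F.x_mem_ends (by omega)))
        by_cases hδβ : c (F.f (i + 1)) = β
        · exfalso
          have hje : F.f (i + 1) = F.f j :=
            hc.color_inj (F.f_mem_diff (by omega) (by omega)) (F.f_mem_diff hj1 hjp)
              (F.x_mem_ends (by omega)) (F.x_mem_ends hjp) (by rw [hδβ, hcfj])
          have hij : i + 1 = j := F.inj (i + 1) (by omega) j hjp hje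
          omega
        · exact (swapColor_missing_other hδα hδβ (F.z i)).2 hci
      have hαx₁ : α ∈ G.missingOn k (W \ {e₀}) (swapColor (W \ {e₀}) c α β u) x := by
        rw [swapColor_missing_of_not_comp hxu']; exact hα
      have hαu₁ : α ∈ G.missingOn k (W \ {e₀}) (swapColor (W \ {e₀}) c α β u) u :=
        swapColor_missing_alpha hαβ hα.1 hβu
      exact fan_rotate (j - 1) _ hc₁
        ⟨j - 1, F.f, F.z, F.f0, F.z0, fun i hi => F.mem i (by omega),
          fun i hi => F.ends_eq i (by omega),
          fun i hi j' hj' h => F.inj i (by omega) j' (by omega) h, hcond₁⟩ rfl α hαx₁ hαu₁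
  · -- counting contradiction
    exfalso
    push_neg at hend
    set J : Set ℕ := {j | 1 ≤ j ∧ j ≤ F.p ∧ F.z (j - 1) = zp} with hJ
    set I : Set ℕ := {i | i ≤ F.p ∧ F.z i = zp} with hI
    have hJfin : J.Finite := (Set.finite_Icc 1 F.p).subset (fun j hj => ⟨hj.1, hj.2.1⟩)
    have hIfin : I.Finite := (Set.finite_Iic F.p).subset (fun i hi => hi.1)
    have hMJ : (G.missingOn k (W \ {e₀}) c zp).ncard ≤ J.ncard := by
      choose φ h1 h2 h3 using hfan_edge
      classical
      refine Set.ncard_le_ncard_of_injOn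
        (fun γ => if h : γ ∈ G.missingOn k (W \ {e₀}) c zp then φ γ h else 0) ?_ ?_
        hJfin
      · intro γ hγ
        simp only [dif_pos hγ]
        exact ⟨h1 γ hγ, h2 γ hγ, hend γ hγ (φ γ hγ) (h1 γ hγ) (h2 γ hγ) (h3 γ hγ)⟩
      · intro γ hγ γ' hγ' hφ
        simp only [dif_pos hγ, dif_pos hγ'] at hφ
        rw [← h3 γ hγ, ← h3 γ' hγ', hφ]
    have hJI : J.ncard + 1 ≤ I.ncard := by
      have hJd : J.ncard ≤ (I \ {F.p}).ncard := by
        refine Set.ncard_le_ncard_of_injOn (fun j => j - 1) ?_ ?_ hIfin.diff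
        · rintro j ⟨hj1, hjp, hjz⟩
          simp only [Set.mem_diff, Set.mem_setOf_eq, Set.mem_singleton_iff, hI]
          exact ⟨⟨by omega, hjz⟩, by omega⟩
        · rintro j ⟨hj1, -, -⟩ j' ⟨hj'1, -, -⟩ h
          have h' : j - 1 = j' - 1 := h
          omega
      have hpI : F.p ∈ I := ⟨le_rfl, rfl⟩
      have := Set.ncard_diff_singleton_add_one hpI hIfin
      omega
    have hIm : I.ncard ≤ G.multOn W x zp := by
      refine Set.ncard_le_ncard_of_injOn (fun i => F.f i) ?_ ?_ (Set.toFinite _)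
      · rintro i ⟨hip, hiz⟩
        exact ⟨F.mem i hip, by rw [F.ends_eq i hip, hiz]⟩
      · rintro i ⟨hip, -⟩ i' ⟨hi'p, -⟩ h
        exact F.inj i hip i' hi'p h
    omega

end Multigraph

namespace Multigraph

variable {G : Multigraph}

lemma degreeOn_mono {W' W : Set G.E} (h : W' ⊆ W) (v : G.V) :
    G.degreeOn W' v ≤ G.degreeOn W v :=
  Set.ncard_le_ncard (fun e he => ⟨h he.1, he.2⟩) (Set.toFinite _)

lemma multOn_mono {W' W : Set G.E} (h : W' ⊆ W) (a b : G.V) :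
    G.multOn W' a b ≤ G.multOn W a b :=
  Set.ncard_le_ncard (fun e he => ⟨h he.1, he.2⟩) (Set.toFinite _)

/-- The main engine: if every vertex has degree at most `k` and every edge `e ∈ E(a,b)`
satisfies `d(a) + m(a,b) ≤ k` or `d(b) + m(a,b) ≤ k`, then there is a proper `k`-coloring. -/
lemma color_all (k : ℕ) : ∀ (n : ℕ) (W : Set G.E), W.ncard = n →
    (∀ v, G.degreeOn W v ≤ k) →
    (∀ e ∈ W, ∀ a b : G.V, G.ends e = s(a, b) →
      G.degreeOn W a + G.multOn W a b ≤ k ∨ G.degreeOn W b + G.multOn W a b ≤ k) →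
    ∃ c, G.IsProperColoringOn k W c := by
  intro n
  induction n using Nat.strong_induction_on with
  | _ n ih =>
  intro W hn hA1 hA2
  rcases Set.eq_empty_or_nonempty W with rfl | ⟨e₁, he₁⟩
  · exact ⟨fun _ => 1, fun e he => absurd he (Set.notMem_empty _),
      fun e he => absurd he (Set.notMem_empty _)⟩
  · obtain ⟨a₁, b₁, hab₁, hε₁⟩ := ends_exists_pair e₁
    haveI : Nonempty G.V := ⟨a₁⟩
    obtain ⟨x, hxmax⟩ := Finite.exists_max (G.degreeOn W)
    have hda₁ : 1 ≤ G.degreeOn W a₁ := by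
      rw [degreeOn, show (1:ℕ) = ({e₁} : Set G.E).ncard from (Set.ncard_singleton _).symm]
      refine Set.ncard_le_ncard ?_ (Set.toFinite _)
      simp only [Set.singleton_subset_iff, Set.mem_setOf_eq]
      exact ⟨he₁, by rw [hε₁]; exact Sym2.mem_mk_left _ _⟩
    have hdx1 : 1 ≤ G.degreeOn W x := le_trans hda₁ (hxmax a₁)
    have hxedge : {e : G.E | e ∈ W ∧ x ∈ G.ends e}.Nonempty := by
      apply Set.nonempty_of_ncard_ne_zero
      rw [← degreeOn]  -- degreeOn is exactly this ncard
      omega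
    obtain ⟨ex, hexW, hexx⟩ := hxedge
    obtain ⟨y₀, hy₀x, hεx⟩ := exists_other hexx
    set W' := W \ {ex} with hW'
    have hW'sub : W' ⊆ W := Set.diff_subset
    have hW'card : W'.ncard < n := by
      rw [← hn]
      exact Set.ncard_diff_singleton_lt_of_mem hexW (Set.toFinite _)
    obtain ⟨c, hc⟩ := ih W'.ncard hW'card W' rfl
      (fun v => le_trans (degreeOn_mono hW'sub v) (hA1 v))
      (fun e he a b hε => (hA2 e (hW'sub he) a b hε).imp
        (fun h => le_trans (Nat.add_le_add (degreeOn_mono hW'sub a) (multOn_mono hW'sub a b)) h)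
        (fun h => le_trans (Nat.add_le_add (degreeOn_mono hW'sub b) (multOn_mono hW'sub a b)) h))
    refine extend_coloring hc hexW hεx (hA1 x) ?_
    intro z hz
    obtain ⟨f, hfW, hfε⟩ := hz
    rcases hA2 f hfW x z hfε with h | h
    · have := hxmax z
      omega
    · exact h
  -- done

end Multigraph
open Multigraph in
/-- **Corollary 3.4.** Let `M` be a matching of `G` such that every edge of `M` is fully
`G`-saturated and `M` is maximal subject to this property (every fully `G`-saturated edge
shares a vertex with some edge of `M`). Then `χ'(G - M) ≤ Δ(G) + μ(G) - 1`. -/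
theorem berge_fournier_corollary (G : Multigraph) (M : Set G.E)
    (hM : G.IsMatching M)
    (hsat : ∀ e ∈ M, G.IsFullySaturated e)
    (hmax : ∀ f : G.E, G.IsFullySaturated f →
      ∃ g ∈ M, ∃ v : G.V, v ∈ G.ends f ∧ v ∈ G.ends g) :
    G.chromIndexOn Mᶜ ≤ G.maxDegree + G.maxMult - 1 := by
  classical
  set k := G.maxDegree + G.maxMult - 1 with hk
  -- basic facts about Δ and μ
  have hdegΔ : ∀ v : G.V, G.degree v ≤ G.maxDegree := by
    intro v
    exact le_csSup ((Set.finite_range G.degree).bddAbove) (Set.mem_range_self v)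
  have hmultμ : ∀ a b : G.V, G.mult a b ≤ G.maxMult := by
    intro a b
    have hbdd : BddAbove {m : ℕ | ∃ x y : G.V, G.mult x y = m} := by
      have : {m : ℕ | ∃ x y : G.V, G.mult x y = m}
          = Set.range (fun p : G.V × G.V => G.mult p.1 p.2) := by
        ext m
        simp only [Set.mem_setOf_eq, Set.mem_range, Prod.exists]
      rw [this]
      exact (Set.finite_range _).bddAbove
    exact le_csSup hbdd ⟨a, b, rfl⟩
  have hdeg1 : ∀ (e : G.E) (v : G.V), v ∈ G.ends e → 1 ≤ G.degree v := by
    intro e v hv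
    rw [degree, show (1:ℕ) = ({e} : Set G.E).ncard from (Set.ncard_singleton _).symm]
    exact Set.ncard_le_ncard (by simpa using hv) (Set.toFinite _)
  have hmult1 : ∀ (e : G.E) (a b : G.V), G.ends e = s(a, b) → 1 ≤ G.mult a b := by
    intro e a b hε
    rw [mult, show (1:ℕ) = ({e} : Set G.E).ncard from (Set.ncard_singleton _).symm]
    exact Set.ncard_le_ncard (by simpa using hε) (Set.toFinite _)
  have hdegOn : ∀ v : G.V, G.degreeOn Mᶜ v ≤ G.degree v :=
    fun v => Set.ncard_le_ncard (fun e he => he.2) (Set.toFinite _)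
  have hmultOn : ∀ a b : G.V, G.multOn Mᶜ a b ≤ G.mult a b :=
    fun a b => Set.ncard_le_ncard (fun e he => he.2) (Set.toFinite _)
  -- hypothesis A1 of the engine
  have hA1 : ∀ v : G.V, G.degreeOn Mᶜ v ≤ k := by
    intro v
    rcases Nat.eq_zero_or_pos (G.degreeOn Mᶜ v) with h0 | h1
    · omega
    · have h1' : {e : G.E | e ∈ Mᶜ ∧ v ∈ G.ends e}.ncard = G.degreeOn Mᶜ v := rfl
      obtain ⟨e, heM, hve⟩ := Set.nonempty_of_ncard_ne_zero (by omega :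
        {e : G.E | e ∈ Mᶜ ∧ v ∈ G.ends e}.ncard ≠ 0)
      obtain ⟨a, b, hab, hε⟩ := ends_exists_pair e
      have hμ1 : 1 ≤ G.maxMult := le_trans (hmult1 e a b hε) (hmultμ a b)
      have := hdegΔ v
      have := hdegOn v
      omega
  -- hypothesis A2 of the engine
  have hA2 : ∀ e ∈ Mᶜ, ∀ a b : G.V, G.ends e = s(a, b) →
      G.degreeOn Mᶜ a + G.multOn Mᶜ a b ≤ k ∨ G.degreeOn Mᶜ b + G.multOn Mᶜ a b ≤ k := by
    intro e heM a b hε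
    have hμ1 : 1 ≤ G.maxMult := le_trans (hmult1 e a b hε) (hmultμ a b)
    have hΔ1 : 1 ≤ G.maxDegree := le_trans (hdeg1 e a (by rw [hε]; exact Sym2.mem_mk_left _ _))
      (hdegΔ a)
    by_cases hsa : G.IsFullySaturated e
    · -- e is fully saturated: it meets an edge of the matching
      obtain ⟨g, hgM, v, hvf, hvg⟩ := hmax e hsa
      have hdegv : G.degreeOn Mᶜ v + 1 ≤ G.degree v := by
        have hsub : {e' : G.E | e' ∈ Mᶜ ∧ v ∈ G.ends e'}
            ⊆ {e' : G.E | v ∈ G.ends e'} \ {g} := by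
          rintro e' ⟨he'M, hve'⟩
          exact ⟨hve', fun h => he'M (by rw [Set.mem_singleton_iff] at h; rw [h]; exact hgM)⟩
        have h2 : ({e' : G.E | v ∈ G.ends e'} \ {g}).ncard + 1
            = {e' : G.E | v ∈ G.ends e'}.ncard :=
          Set.ncard_diff_singleton_add_one hvg (Set.toFinite _)
        have h3 := Set.ncard_le_ncard hsub (Set.toFinite _)
        rw [degreeOn, degree]
        omega
      have hvab : v = a ∨ v = b := by rwa [hε, Sym2.mem_iff] at hvf
      have hma := hmultOn a b
      have hmb := hmultμ a b
      rcases hvab with rfl | rfl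
      · left
        have := hdegΔ v
        omega
      · right
        have := hdegΔ v
        omega
    · -- e is not fully saturated
      rw [IsFullySaturated] at hsa
      push_neg at hsa
      have h3 := hsa a b hε
      have hma := hmultOn a b
      have hmb := hmultμ a b
      have hda := hdegOn a
      have hdb := hdegOn b
      have hdΔa := hdegΔ a
      have hdΔb := hdegΔ b
      by_cases h1 : G.degree a = G.maxDegree
      · by_cases h2 : G.degree b = G.maxDegree
        · have h4 : G.mult a b ≠ G.maxMult := by
            intro h
            exact (h3 h1 h2) h
          left
          omega
        · right
          have : G.degree b ≤ G.maxDegree := hdegΔ b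
          omega
      · left
        have : G.degree a ≤ G.maxDegree := hdegΔ a
        omega
  obtain ⟨c, hc⟩ := color_all k Mᶜ.ncard Mᶜ rfl hA1 hA2
  exact Nat.sInf_le ⟨c, hc⟩
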